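/- arXiv:2507.23024 — 2 statements merged into one kernel-verified Lean document; each statement's English description precedes it below -/
import Mathlib

section
/- Let k ≥ 2, and let d₁, d₂, d₃, n_r (r ≥ 2), t₃, t₅, t₇, j be nonnegative integers satisfying: (i) the Tjurina identity τ = (2k-1)² - d₁(2k-d₁-1) - (d₃-d₂+1) where τ = Σ_{r≥2}(r-1)²·n_r + 3t₃ + 5t₅ + 7t₇ + 10j; (ii) the Bézout count 2(k²-k) = Σ_{r≥2} C(r,2)·n_r + 2t₃ + 3t₅ + 4t₇ + 6j; (iii) d₁ + d₂ = 2k. Then d₁·d₂ + d₃ = Σ_{r≥2}(r-1)·n_r + t₃ + t₅ + t₇ + 2j + 2k. -/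
/-!
Since `2·C(r,2) = r(r-1) = (r-1)² + (r-1)`, twice the Bézout count is the Milnor part of the
Tjurina number plus the sum `Σ (r-1)·n_r` we are after. Eliminating the Milnor part between the
two identities expresses that sum through `k` and `τ`, and `d₂ = 2k - d₁` turns the Tjurina
formula into `τ = 4k² - 2k - d₁d₂ - d₃`.
-/

open Finset

lemma two_mul_cast_choose_two (r : ℕ) : 2 * (r.choose 2 : ℤ) = r * ((r : ℤ) - 1) := by
  have h : 2 * (r.choose 2 : ℚ) = r * (r - 1) := by
    rw [Nat.cast_choose_two]
    ring
  exact_mod_cast h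

lemma two_mul_sum_choose_two_mul {ι : Type*} (S : Finset ι) (r n : ι → ℕ) :
    2 * ∑ i ∈ S, ((r i).choose 2 : ℤ) * n i
      = ∑ i ∈ S, ((r i : ℤ) - 1) ^ 2 * n i + ∑ i ∈ S, ((r i : ℤ) - 1) * n i := by
  rw [mul_sum, ← sum_add_distrib]
  refine sum_congr rfl fun i _ => ?_
  linear_combination (n i : ℤ) * two_mul_cast_choose_two (r i)

theorem stmt0_general (k d1 d2 d3 t3 t5 t7 j : ℕ)
    (S : Finset ℕ) (n : ℕ → ℕ)
    (htau : (∑ r ∈ S, ((r : ℤ) - 1) ^ 2 * n r) + 3 * t3 + 5 * t5 + 7 * t7 + 10 * j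
      = (2 * (k : ℤ) - 1) ^ 2 - d1 * (2 * k - d1 - 1) - ((d3 : ℤ) - d2 + 1))
    (hbez : 2 * ((k : ℤ) ^ 2 - k)
      = (∑ r ∈ S, (r.choose 2 : ℤ) * n r) + 2 * t3 + 3 * t5 + 4 * t7 + 6 * j)
    (hsum : d1 + d2 = 2 * k) :
    (d1 : ℤ) * d2 + d3
      = (∑ r ∈ S, ((r : ℤ) - 1) * n r) + t3 + t5 + t7 + 2 * j + 2 * k := by
  have hweights := two_mul_sum_choose_two_mul S (fun r => r) n
  have hd : (d1 : ℤ) + d2 = 2 * k := by exact_mod_cast hsum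
  linear_combination htau + 2 * hbez + hweights + (d1 + 1 : ℤ) * hd

/-- Combinatorial content of Lemma 3.1: for a plus-one generated arrangement of
`k ≥ 2` conics with quasi-homogeneous singularities, the Tjurina identity,
the Bézout count, and `d₁ + d₂ = 2k` imply
`d₁·d₂ + d₃ = Σ (r-1)·n_r + t₃ + t₅ + t₇ + 2j + 2k`. -/
theorem stmt0 (k d1 d2 d3 t3 t5 t7 j : ℕ) (hk : 2 ≤ k)
    (S : Finset ℕ) (n : ℕ → ℕ) (hS : ∀ r ∈ S, 2 ≤ r)
    (htau : (∑ r ∈ S, ((r : ℤ) - 1) ^ 2 * n r) + 3 * t3 + 5 * t5 + 7 * t7 + 10 * j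
      = (2 * (k : ℤ) - 1) ^ 2 - d1 * (2 * k - d1 - 1) - ((d3 : ℤ) - d2 + 1))
    (hbez : 2 * ((k : ℤ) ^ 2 - k)
      = (∑ r ∈ S, (r.choose 2 : ℤ) * n r) + 2 * t3 + 3 * t5 + 4 * t7 + 6 * j)
    (hsum : d1 + d2 = 2 * k) :
    (d1 : ℤ) * d2 + d3
      = (∑ r ∈ S, ((r : ℤ) - 1) * n r) + t3 + t5 + t7 + 2 * j + 2 * k :=
  stmt0_general k d1 d2 d3 t3 t5 t7 j S n htau hbez hsum
end

section
/- Let k ≥ 2 and let r, n₂, t₃ be nonnegative integers satisfying r² − r(2k−1) + (2k−1)² = n₂ + 3t₃ + 2 and 2k(k−1) = n₂ + 2t₃. Then n₂ ≤ 2; moreover n₂ is even, so n₂ ∈ {0, 2}. -/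
/-! Eliminating `t₃` between the two relations leaves `n₂ = 2 (1 - m (m + 1))` with `m = r - k`.
A product of two consecutive integers is nonnegative and even, so `n₂ ≥ 0` forces `m (m + 1) = 0`,
that is `n₂ = 2`. -/

theorem Int.mul_add_one_self_eq_zero_of_le_one {m : ℤ} (h : m * (m + 1) ≤ 1) :
    m * (m + 1) = 0 := by
  obtain ⟨j, hj⟩ := Int.even_mul_succ_self m
  have hnonneg : 0 ≤ m * (m + 1) := by
    rcases le_or_gt 0 m with hm | hm <;> nlinarith
  omega

theorem eq_two_of_nonneg_of_eq_two_mul_one_sub {n m : ℤ} (hn : 0 ≤ n)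
    (h : n = 2 * (1 - m * (m + 1))) : n = 2 := by
  have hm : m * (m + 1) = 0 := Int.mul_add_one_self_eq_zero_of_le_one (by linarith)
  rw [h, hm]
  norm_num

theorem stmt6_general (k r n2 t3 : ℤ) (hn2 : 0 ≤ n2)
    (h1 : r ^ 2 - r * (2 * k - 1) + (2 * k - 1) ^ 2 = n2 + 3 * t3 + 2)
    (h2 : 2 * k * (k - 1) = n2 + 2 * t3) :
    n2 ≤ 2 ∧ Even n2 ∧ (n2 = 0 ∨ n2 = 2) := by
  have hn2_eq : n2 = 2 * (1 - (r - k) * (r - k + 1)) := by linear_combination 2 * h1 - 3 * h2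
  obtain rfl : n2 = 2 := eq_two_of_nonneg_of_eq_two_mul_one_sub hn2 hn2_eq
  exact ⟨le_rfl, even_two, Or.inr rfl⟩

/-- Minimal plus-one generated conic arrangements with nodes and tacnodes:
the two numerical constraints force `n₂ ≤ 2` and `n₂` even, hence `n₂ ∈ {0, 2}`. -/
theorem stmt6 (k r n2 t3 : ℤ) (hk : 2 ≤ k) (hr : 0 ≤ r) (hn2 : 0 ≤ n2) (ht3 : 0 ≤ t3)
    (h1 : r ^ 2 - r * (2 * k - 1) + (2 * k - 1) ^ 2 = n2 + 3 * t3 + 2)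
    (h2 : 2 * k * (k - 1) = n2 + 2 * t3) :
    n2 ≤ 2 ∧ Even n2 ∧ (n2 = 0 ∨ n2 = 2) :=
  stmt6_general k r n2 t3 hn2 h1 h2
end
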